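/- Lloyd's configuration and the solved configuration lie in different equivalence classes of the reachability relation, and the invariant sign(σ)·(−1)^(i+j) distinguishes these classes: it equals 1 on the solved state's class and −1 on Lloyd's state's class. -/

import Mathlib

/-- Two cells of the 4×4 grid are adjacent: differ by one in exactly one coordinate. -/
def Adj (b b' : Fin 4 × Fin 4) : Prop :=
  (b.1 = b'.1 ∧ (b.2.val = b'.2.val + 1 ∨ b'.2.val = b.2.val + 1)) ∨
  (b.2 = b'.2 ∧ (b.1.val = b'.1.val + 1 ∨ b'.1.val = b.1.val + 1))

/-- Linear index of a cell in `Fin 16`. -/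
def pos (b : Fin 4 × Fin 4) : Fin 16 :=
  ⟨b.1.val * 4 + b.2.val, by have := b.1.isLt; have := b.2.isLt; omega⟩

/-- One elementary move: the blank swaps with an adjacent tile. -/
def Move (s t : Equiv.Perm (Fin 16) × (Fin 4 × Fin 4)) : Prop :=
  Adj s.2 t.2 ∧ t.1 = Equiv.swap (pos s.2) (pos t.2) * s.1

/-- Reachability: reflexive-transitive closure of elementary moves. -/
def Reachable : (Equiv.Perm (Fin 16) × (Fin 4 × Fin 4)) →
    (Equiv.Perm (Fin 16) × (Fin 4 × Fin 4)) → Prop :=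
  Relation.ReflTransGen Move

/-- The invariant sign(σ)·(−1)^(i+j) of a puzzle state. -/
def I (s : Equiv.Perm (Fin 16) × (Fin 4 × Fin 4)) : ℤˣ :=
  Equiv.Perm.sign s.1 * (-1) ^ (s.2.1.val + s.2.2.val)

/-! A move multiplies the permutation by a transposition, flipping its sign, and moves the
blank to a neighbouring cell, flipping the parity of `i + j`; so `I` is unchanged. -/

lemma neg_one_pow_eq_neg_of_succ {M : Type*} [Monoid M] [HasDistribNeg M] {a b : ℕ}
    (h : a = b + 1 ∨ b = a + 1) : (-1 : M) ^ a = -(-1) ^ b := by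
  rcases h with rfl | rfl
  · rw [pow_succ, mul_neg_one]
  · rw [pow_succ, mul_neg_one, neg_neg]

lemma pos_injective : Function.Injective pos := by
  rintro ⟨i, j⟩ ⟨i', j'⟩ h
  have := congrArg Fin.val h
  simp only [pos] at this
  ext <;> simp only <;> omega

lemma Adj.ne {b b' : Fin 4 × Fin 4} (h : Adj b b') : b ≠ b' := by
  rintro rfl
  rcases h with ⟨-, h | h⟩ | ⟨-, h | h⟩ <;> omega

lemma Adj.neg_one_pow_add {b b' : Fin 4 × Fin 4} (h : Adj b b') :
    (-1 : ℤˣ) ^ (b'.1.val + b'.2.val) = -(-1) ^ (b.1.val + b.2.val) := by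
  apply neg_one_pow_eq_neg_of_succ
  rcases h with ⟨he, h⟩ | ⟨he, h⟩ <;> have := congrArg Fin.val he <;> omega

lemma I_eq_of_move {s t : Equiv.Perm (Fin 16) × (Fin 4 × Fin 4)} (h : Move s t) :
    I s = I t := by
  obtain ⟨hadj, ht⟩ := h
  have hsign : Equiv.Perm.sign (Equiv.swap (pos s.2) (pos t.2)) = -1 :=
    Equiv.Perm.sign_swap (pos_injective.ne hadj.ne)
  rw [I, I, ht, map_mul, hsign, hadj.neg_one_pow_add]
  simp

lemma I_eq_of_reachable {s t : Equiv.Perm (Fin 16) × (Fin 4 × Fin 4)} (h : Reachable s t) :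
    I s = I t := by
  induction h with
  | refl => rfl
  | tail _ hmove ih => exact ih.trans (I_eq_of_move hmove)

/-- I is constant on reachability classes, equals 1 on the solved state and −1 on
Lloyd's state, so these states lie in different equivalence classes. -/
theorem invariant_separates :
    (∀ s t, Reachable s t → I s = I t) ∧
    I (1, ((3 : Fin 4), (3 : Fin 4))) = 1 ∧
    I (Equiv.swap (13 : Fin 16) 14, ((3 : Fin 4), (3 : Fin 4))) = -1 ∧
    ¬ Reachable (Equiv.swap (13 : Fin 16) 14, ((3 : Fin 4), (3 : Fin 4)))
      (1, ((3 : Fin 4), (3 : Fin 4))) := by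
  have hsolved : I (1, ((3 : Fin 4), (3 : Fin 4))) = 1 := by
    simp [I, Even.neg_one_pow (⟨3, rfl⟩ : Even 6)]
  have hlloyd : I (Equiv.swap (13 : Fin 16) 14, ((3 : Fin 4), (3 : Fin 4))) = -1 := by
    simp [I, Equiv.Perm.sign_swap (by decide : (13 : Fin 16) ≠ 14),
      Even.neg_one_pow (⟨3, rfl⟩ : Even 6)]
  refine ⟨fun _ _ => I_eq_of_reachable, hsolved, hlloyd, fun h => ?_⟩
  have := (I_eq_of_reachable h).symm.trans hlloyd
  rw [hsolved] at this
  exact absurd this (by decide)
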